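/- If X is a Hermitian matrix with trace zero, then its Hilbert–Schmidt (Frobenius) norm is at most 1/√2 times its trace norm: ‖X‖₂ ≤ (1/√2)‖X‖₁. -/

import Mathlib

open Matrix Kronecker BigOperators
open scoped ComplexOrder

/-- The positive semidefinite square root of a positive semidefinite matrix
(removed from Mathlib; restored with its former definition). -/
noncomputable def Matrix.PosSemidef.sqrt {n : Type*} [Fintype n] [DecidableEq n]
    {A : Matrix n n ℂ} (hA : A.PosSemidef) : Matrix n n ℂ :=
  hA.1.eigenvectorUnitary.1 * diagonal ((↑) ∘ (√·) ∘ hA.1.eigenvalues) *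
  (star hA.1.eigenvectorUnitary : Matrix n n ℂ)

noncomputable def traceNorm {n : Type*} [Fintype n] [DecidableEq n] (X : Matrix n n ℂ) : ℝ :=
  ((Matrix.posSemidef_conjTranspose_mul_self X).sqrt.trace).re

noncomputable def hsNorm {n : Type*} [Fintype n] (X : Matrix n n ℂ) : ℝ :=
  Real.sqrt ((Xᴴ * X).trace.re)

noncomputable def singularValues {n : Type*} [Fintype n] [DecidableEq n] (Y : Matrix n n ℂ) :
    n → ℝ :=
  fun i => Real.sqrt ((Matrix.posSemidef_conjTranspose_mul_self Y).1.eigenvalues i)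

/-- Partial transpose on the first tensor factor. -/
def ptransp {d k : ℕ} (X : Matrix (Fin d × Fin k) (Fin d × Fin k) ℂ) :
    Matrix (Fin d × Fin k) (Fin d × Fin k) ℂ :=
  fun p q => X (q.1, p.2) (p.1, q.2)

/-- Partial trace over the first tensor factor. -/
noncomputable def ptraceH {d k : ℕ} (X : Matrix (Fin d × Fin k) (Fin d × Fin k) ℂ) :
    Matrix (Fin k) (Fin k) ℂ :=
  fun j j' => ∑ i, X (i, j) (i, j')

def vec {d : ℕ} (A : Matrix (Fin d) (Fin d) ℂ) : Fin d × Fin d → ℂ := fun p => A p.1 p.2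

/-- Outer product |v⟩⟨w|. -/
def outer {n : Type*} (v w : n → ℂ) : Matrix n n ℂ := fun i j => v i * star (w j)

/-- The swap operator F(e_i ⊗ e_j) = e_j ⊗ e_i. -/
def swapOp (d : ℕ) : Matrix (Fin d × Fin d) (Fin d × Fin d) ℂ :=
  fun p q => if p.1 = q.2 ∧ p.2 = q.1 then 1 else 0

/-- Blockwise action of Φ ⊗ id on operators on H ⊗ K. -/
def tensorExt {d k : ℕ} (Φ : Matrix (Fin d) (Fin d) ℂ → Matrix (Fin d) (Fin d) ℂ)
    (Z : Matrix (Fin d × Fin k) (Fin d × Fin k) ℂ) :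
    Matrix (Fin d × Fin k) (Fin d × Fin k) ℂ :=
  fun p q => Φ (fun a b => Z (a, p.2) (b, q.2)) p.1 q.1

/-- Diamond norm (stabilized at ancilla dimension d). -/
noncomputable def diamondNorm {d : ℕ}
    (Φ : Matrix (Fin d) (Fin d) ℂ → Matrix (Fin d) (Fin d) ℂ) : ℝ :=
  ⨆ ρ : {ρ : Matrix (Fin d × Fin d) (Fin d × Fin d) ℂ // ρ.PosSemidef ∧ ρ.trace = 1},
    traceNorm (tensorExt Φ ρ.1)

/-!
In an eigenbasis of `X` both norms are norms of the eigenvalue vector `λ`, and `∑ λᵢ = tr X = 0`.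
Then `λᵢ = -∑_{j ≠ i} λⱼ` gives `|λᵢ| ≤ ½ ∑ |λⱼ|`, hence `∑ λᵢ² = ∑ |λᵢ| |λᵢ| ≤ ½ (∑ |λⱼ|)²`.
-/

theorem two_nsmul_abs_le_sum_abs_of_sum_eq_zero {ι α : Type*} [Fintype ι]
    [AddCommGroup α] [LinearOrder α] [IsOrderedAddMonoid α] {f : ι → α}
    (hf : ∑ j, f j = 0) (i : ι) : 2 • |f i| ≤ ∑ j, |f j| := by
  classical
  have hfi : f i = -∑ j ∈ Finset.univ.erase i, f j := by
    rw [eq_neg_iff_add_eq_zero, Finset.add_sum_erase _ _ (Finset.mem_univ i), hf]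
  calc 2 • |f i| = |f i| + |∑ j ∈ Finset.univ.erase i, f j| := by rw [two_nsmul, hfi, abs_neg]
    _ ≤ |f i| + ∑ j ∈ Finset.univ.erase i, |f j| := by grw [Finset.abs_sum_le_sum_abs]
    _ = ∑ j, |f j| := Finset.add_sum_erase _ (fun j ↦ |f j|) (Finset.mem_univ i)

theorem two_mul_sum_sq_le_sq_sum_abs_of_sum_eq_zero {ι : Type*} [Fintype ι] {f : ι → ℝ}
    (hf : ∑ j, f j = 0) : 2 * ∑ i, f i ^ 2 ≤ (∑ i, |f i|) ^ 2 := by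
  calc 2 * ∑ i, f i ^ 2 = ∑ i, |f i| * (2 * |f i|) := by
        rw [Finset.mul_sum]; congr 1 with i; rw [← sq_abs]; ring
    _ ≤ ∑ i, |f i| * ∑ j, |f j| := by
        gcongr with i
        simpa using two_nsmul_abs_le_sum_abs_of_sum_eq_zero hf i
    _ = (∑ i, |f i|) ^ 2 := by rw [← Finset.sum_mul, sq]

theorem sqrt_sum_sq_le_of_sum_eq_zero {ι : Type*} [Fintype ι] {f : ι → ℝ}
    (hf : ∑ j, f j = 0) : √(∑ i, f i ^ 2) ≤ (1 / √2) * ∑ i, |f i| := by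
  rw [Real.sqrt_le_left (by positivity), mul_pow, div_pow, Real.sq_sqrt zero_le_two]
  linarith [two_mul_sum_sq_le_sq_sum_abs_of_sum_eq_zero hf]

namespace Matrix

open scoped MatrixOrder

variable {n 𝕜 : Type*} [Fintype n] [DecidableEq n] [RCLike 𝕜]

theorem IsHermitian.trace_cfc {A : Matrix n n 𝕜} (hA : A.IsHermitian) (f : ℝ → ℝ) :
    (cfc f A).trace = ∑ i, (f (hA.eigenvalues i) : 𝕜) := by
  rw [hA.cfc_eq, IsHermitian.cfc, Unitary.conjStarAlgAut_apply, trace_mul_cycle,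
    Unitary.coe_star_mul_self, one_mul, trace_diagonal]
  rfl

theorem PosSemidef.sqrt_eq_cfc_sqrt {A : Matrix n n ℂ} (hA : A.PosSemidef) :
    hA.sqrt = CFC.sqrt A := by
  rw [CFC.sqrt_eq_cfc, cfc_nnreal_eq_real _ A hA.nonneg, hA.1.cfc_eq]
  simp only [IsHermitian.cfc, Matrix.PosSemidef.sqrt]
  congr 3
  funext i
  simp [Real.coe_sqrt, Real.coe_toNNReal', hA.eigenvalues_nonneg i]

theorem traceNorm_eq_re_trace_abs (X : Matrix n n ℂ) : traceNorm X = (CFC.abs X).trace.re := by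
  rw [traceNorm, PosSemidef.sqrt_eq_cfc_sqrt, CFC.abs, star_eq_conjTranspose]

theorem IsHermitian.traceNorm_eq_sum_abs_eigenvalues {X : Matrix n n ℂ} (hX : X.IsHermitian) :
    traceNorm X = ∑ i, |hX.eigenvalues i| := by
  rw [traceNorm_eq_re_trace_abs, CFC.abs_eq_cfc_norm X hX.isSelfAdjoint, hX.trace_cfc]
  simp [Complex.re_sum]

theorem IsHermitian.hsNorm_eq_sqrt_sum_sq_eigenvalues {X : Matrix n n ℂ} (hX : X.IsHermitian) :
    hsNorm X = √(∑ i, hX.eigenvalues i ^ 2) := by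
  rw [hsNorm, hX.eq, ← sq, ← cfc_pow_id (R := ℝ) X 2 hX.isSelfAdjoint, hX.trace_cfc]
  simp [Complex.re_sum, -Complex.ofReal_pow]

end Matrix

theorem traceless_hermitian_hs_le_trace {n : Type*} [Fintype n] [DecidableEq n]
    (X : Matrix n n ℂ) (hX : X.IsHermitian) (htr : X.trace = 0) :
    hsNorm X ≤ (1 / Real.sqrt 2) * traceNorm X := by
  have hsum : ∑ i, hX.eigenvalues i = 0 := by
    have := congrArg Complex.re (hX.trace_eq_sum_eigenvalues.symm.trans htr)
    simpa [Complex.re_sum] using this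
  rw [hX.hsNorm_eq_sqrt_sum_sq_eigenvalues, hX.traceNorm_eq_sum_abs_eigenvalues]
  exact sqrt_sum_sq_le_of_sum_eq_zero hsum
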